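/- arXiv:0909.0973 — 2 statements merged into one kernel-verified Lean document; each statement's English description precedes it below -/
import Mathlib

section
/- Let X and Y be measurable spaces, g : X × Y → ℝ a bounded measurable function, μ a probability measure on X and ρ a probability measure on Y. Then log ∫_X exp(∫_Y g(x,y) dρ(y)) dμ(x) ≤ ∫_Y log(∫_X exp(g(x,y)) dμ(x)) dρ(y). -/
open MeasureTheory

lemma integrable_of_abs_le {α : Type*} [MeasurableSpace α] (ν : Measure α)
    [IsFiniteMeasure ν] {f : α → ℝ} (hf : AEStronglyMeasurable f ν) (C : ℝ)
    (h : ∀ a, |f a| ≤ C) : Integrable f ν :=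
  ⟨hf, HasFiniteIntegral.of_bounded (C := C) (Filter.Eventually.of_forall fun a => by
    simpa [Real.norm_eq_abs] using h a)⟩

/-- Infinite-dimensional Jensen inequality (Lemma A.1 of Rassoul-Agha--Seppäläinen):
for bounded measurable `g` and probability measures `μ`, `ρ`,
`log ∫ e^{∫ g(x,y) ρ(dy)} μ(dx) ≤ ∫ log ∫ e^{g(x,y)} μ(dx) ρ(dy)`. -/
theorem infinite_dimensional_jensen
    {X Y : Type*} [MeasurableSpace X] [MeasurableSpace Y]
    (μ : Measure X) (ρ : Measure Y)
    [IsProbabilityMeasure μ] [IsProbabilityMeasure ρ]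
    (g : X × Y → ℝ) (hg : Measurable g) (C : ℝ) (hbd : ∀ p, |g p| ≤ C) :
    Real.log (∫ x, Real.exp (∫ y, g (x, y) ∂ρ) ∂μ)
      ≤ ∫ y, Real.log (∫ x, Real.exp (g (x, y)) ∂μ) ∂ρ := by
  classical
  -- X, Y nonempty
  have hXne : Nonempty X := by
    by_contra h
    have : μ Set.univ = 0 := by
      simp [Set.univ_eq_empty_iff.2 (not_nonempty_iff.1 h)]
    simp [measure_univ] at this
  have hYne : Nonempty Y := by
    by_contra h
    have : ρ Set.univ = 0 := by
      simp [Set.univ_eq_empty_iff.2 (not_nonempty_iff.1 h)]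
    simp [measure_univ] at this
  have hC : 0 ≤ C := (abs_nonneg _).trans (hbd (Classical.arbitrary _))
  set Z : Y → ℝ := fun y => ∫ x, Real.exp (g (x, y)) ∂μ with hZdef
  have hge : Measurable fun p : X × Y => Real.exp (g p) := Real.measurable_exp.comp hg
  -- slice measurability
  have hgx : ∀ x : X, Measurable fun y => g (x, y) :=
    fun x => hg.comp measurable_prodMk_left
  have hgy : ∀ y : Y, Measurable fun x => g (x, y) :=
    fun y => hg.comp measurable_prodMk_right
  -- integrability of exp(g(·,y)) on μ
  have hexp_int : ∀ y : Y, Integrable (fun x => Real.exp (g (x, y))) μ := fun y =>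
    integrable_of_abs_le μ ((Real.measurable_exp.comp (hgy y)).aestronglyMeasurable)
      (Real.exp C) (fun x => by
        rw [abs_of_pos (Real.exp_pos _)]
        exact Real.exp_le_exp.2 ((abs_le.1 (hbd (x, y))).2))
  -- bounds on Z
  have hZlb : ∀ y, Real.exp (-C) ≤ Z y := by
    intro y
    have h1 : Real.exp (-C) = ∫ (_ : X), Real.exp (-C) ∂μ := by simp
    rw [h1]
    exact integral_mono (integrable_const _) (hexp_int y)
      (fun x => Real.exp_le_exp.2 (abs_le.1 (hbd (x, y))).1)
  have hZub : ∀ y, Z y ≤ Real.exp C := by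
    intro y
    have h1 : Real.exp C = ∫ (_ : X), Real.exp C ∂μ := by simp
    rw [h1]
    exact integral_mono (hexp_int y) (integrable_const _)
      (fun x => Real.exp_le_exp.2 (abs_le.1 (hbd (x, y))).2)
  have hZpos : ∀ y, 0 < Z y := fun y => (Real.exp_pos _).trans_le (hZlb y)
  have hlogZ_bd : ∀ y, |Real.log (Z y)| ≤ C := by
    intro y
    rw [abs_le]
    constructor
    · calc -C = Real.log (Real.exp (-C)) := (Real.log_exp _).symm
      _ ≤ Real.log (Z y) := Real.log_le_log (Real.exp_pos _) (hZlb y)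
    · calc Real.log (Z y) ≤ Real.log (Real.exp C) :=
          Real.log_le_log (hZpos y) (hZub y)
      _ = C := Real.log_exp _
  -- measurability of Z and log Z
  have hZm : StronglyMeasurable Z :=
    hge.stronglyMeasurable.integral_prod_left'
  have hlogZm : Measurable fun y => Real.log (Z y) :=
    Real.measurable_log.comp hZm.measurable
  have hlogZ_int : Integrable (fun y => Real.log (Z y)) ρ :=
    integrable_of_abs_le ρ hlogZm.aestronglyMeasurable C hlogZ_bd
  set c : ℝ := ∫ y, Real.log (Z y) ∂ρ with hcdef
  -- pointwise Jensen step
  have hgslice_int : ∀ x, Integrable (fun y => g (x, y)) ρ := fun x =>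
    integrable_of_abs_le ρ (hgx x).aestronglyMeasurable C (fun y => hbd (x, y))
  have key : ∀ x, Real.exp (∫ y, g (x, y) ∂ρ)
      ≤ Real.exp c * ∫ y, Real.exp (g (x, y)) / Z y ∂ρ := by
    intro x
    have hdiff_int : Integrable (fun y => g (x, y) - Real.log (Z y)) ρ :=
      (hgslice_int x).sub hlogZ_int
    have hdiff_bd : ∀ y, |g (x, y) - Real.log (Z y)| ≤ 2 * C := by
      intro y
      calc |g (x, y) - Real.log (Z y)| ≤ |g (x, y)| + |Real.log (Z y)| := abs_sub _ _
      _ ≤ C + C := add_le_add (hbd _) (hlogZ_bd y)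
      _ = 2 * C := by ring
    have hexpdiff_int : Integrable (fun y => Real.exp (g (x, y) - Real.log (Z y))) ρ :=
      integrable_of_abs_le ρ
        ((Real.measurable_exp.comp ((hgx x).sub hlogZm)).aestronglyMeasurable)
        (Real.exp (2 * C)) (fun y => by
          rw [abs_of_pos (Real.exp_pos _)]
          exact Real.exp_le_exp.2 ((abs_le.1 (hdiff_bd y)).2))
    -- Jensen for exp
    have jensen : Real.exp (∫ y, (g (x, y) - Real.log (Z y)) ∂ρ)
        ≤ ∫ y, Real.exp (g (x, y) - Real.log (Z y)) ∂ρ := by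
      have := convexOn_exp.map_integral_le (μ := ρ)
        (f := fun y => g (x, y) - Real.log (Z y))
        Real.continuous_exp.continuousOn isClosed_univ
        (Filter.Eventually.of_forall fun y => Set.mem_univ _) hdiff_int hexpdiff_int
      simpa [Function.comp] using this
    have hsplit : ∫ y, g (x, y) ∂ρ = (∫ y, (g (x, y) - Real.log (Z y)) ∂ρ) + c := by
      rw [integral_sub (hgslice_int x) hlogZ_int]; ring
    have hdivrw : ∀ y, Real.exp (g (x, y) - Real.log (Z y))
        = Real.exp (g (x, y)) / Z y := by
      intro y
      rw [Real.exp_sub, Real.exp_log (hZpos y)]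
    calc Real.exp (∫ y, g (x, y) ∂ρ)
        = Real.exp (∫ y, (g (x, y) - Real.log (Z y)) ∂ρ) * Real.exp c := by
          rw [hsplit, Real.exp_add]
      _ ≤ (∫ y, Real.exp (g (x, y) - Real.log (Z y)) ∂ρ) * Real.exp c :=
          mul_le_mul_of_nonneg_right jensen (Real.exp_pos _).le
      _ = Real.exp c * ∫ y, Real.exp (g (x, y)) / Z y ∂ρ := by
          rw [mul_comm]
          congr 1
          exact integral_congr_ae (Filter.Eventually.of_forall fun y => hdivrw y)
  -- LHS function is integrable and bounded below
  have hFm : StronglyMeasurable fun x => ∫ y, g (x, y) ∂ρ :=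
    hg.stronglyMeasurable.integral_prod_right'
  have hFbd : ∀ x, |∫ y, g (x, y) ∂ρ| ≤ C := by
    intro x
    have h1 : |∫ y, g (x, y) ∂ρ| ≤ ∫ y, |g (x, y)| ∂ρ := by
      simpa [Real.norm_eq_abs] using
        norm_integral_le_integral_norm (μ := ρ) (fun y => g (x, y))
    have h2 : ∫ y, |g (x, y)| ∂ρ ≤ ∫ (_ : Y), C ∂ρ :=
      integral_mono (hgslice_int x).abs (integrable_const _) (fun y => hbd (x, y))
    have h3 : ∫ (_ : Y), C ∂ρ = C := by simp
    linarith
  have hexpF_int : Integrable (fun x => Real.exp (∫ y, g (x, y) ∂ρ)) μ :=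
    integrable_of_abs_le μ
      (Real.measurable_exp.comp hFm.measurable).aestronglyMeasurable
      (Real.exp C) (fun x => by
        rw [abs_of_pos (Real.exp_pos _)]
        exact Real.exp_le_exp.2 (abs_le.1 (hFbd x)).2)
  -- the product function exp(g)/Z is integrable on μ.prod ρ
  have hprod_m : Measurable fun p : X × Y => Real.exp (g p) / Z p.2 :=
    hge.div (hZm.measurable.comp measurable_snd)
  have hprod_bd : ∀ p : X × Y, |Real.exp (g p) / Z p.2| ≤ Real.exp C / Real.exp (-C) := by
    intro p
    rw [abs_of_pos (div_pos (Real.exp_pos _) (hZpos p.2))]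
    exact div_le_div₀ (Real.exp_pos _).le
      (Real.exp_le_exp.2 (abs_le.1 (hbd p)).2) (Real.exp_pos _) (hZlb p.2)
  have hprod_int : Integrable (fun p : X × Y => Real.exp (g p) / Z p.2) (μ.prod ρ) :=
    integrable_of_abs_le (μ.prod ρ) hprod_m.aestronglyMeasurable _ hprod_bd
  -- Fubini and inner computation
  have hswap : ∫ x, ∫ y, Real.exp (g (x, y)) / Z y ∂ρ ∂μ
      = ∫ y, ∫ x, Real.exp (g (x, y)) / Z y ∂μ ∂ρ :=
    integral_integral_swap (f := fun x y => Real.exp (g (x, y)) / Z y) hprod_int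
  have hinner : ∀ y, ∫ x, Real.exp (g (x, y)) / Z y ∂μ = 1 := by
    intro y
    rw [integral_div]
    exact div_self (hZpos y).ne'
  -- main inequality on integrals
  have hmain : ∫ x, Real.exp (∫ y, g (x, y) ∂ρ) ∂μ ≤ Real.exp c := by
    have hrhs_int : Integrable (fun x => Real.exp c * ∫ y, Real.exp (g (x, y)) / Z y ∂ρ) μ :=
      (hprod_int.integral_prod_left).const_mul _
    calc ∫ x, Real.exp (∫ y, g (x, y) ∂ρ) ∂μ
        ≤ ∫ x, Real.exp c * ∫ y, Real.exp (g (x, y)) / Z y ∂ρ ∂μ :=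
          integral_mono hexpF_int hrhs_int key
      _ = Real.exp c * ∫ x, ∫ y, Real.exp (g (x, y)) / Z y ∂ρ ∂μ := integral_const_mul _ _
      _ = Real.exp c * ∫ y, ∫ x, Real.exp (g (x, y)) / Z y ∂μ ∂ρ := by rw [hswap]
      _ = Real.exp c := by
          rw [integral_congr_ae (Filter.Eventually.of_forall hinner)]
          simp
  -- positivity of the LHS integral
  have hpos : 0 < ∫ x, Real.exp (∫ y, g (x, y) ∂ρ) ∂μ := by
    have : Real.exp (-C) ≤ ∫ x, Real.exp (∫ y, g (x, y) ∂ρ) ∂μ := by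
      have h1 : Real.exp (-C) = ∫ (_ : X), Real.exp (-C) ∂μ := by simp
      rw [h1]
      exact integral_mono (integrable_const _) hexpF_int
        (fun x => Real.exp_le_exp.2 (abs_le.1 (hFbd x)).1)
    exact (Real.exp_pos _).trans_le this
  exact (Real.log_le_iff_le_exp hpos).2 hmain
end

section
/- Let μ be a probability measure on a Polish space X and let p, q, q̂ be Markov kernels on X with stationary probability measures μ and μ̂ respectively (μq = μ, μ̂q̂ = μ̂). Suppose ε ∈ (0,1), set μ_ε = ε μ̂ + (1−ε) μ, let f_ε = dμ/dμ_ε and f̂_ε = dμ̂/dμ_ε (which exist since μ, μ̂ ≪ μ_ε), and define the kernel q_ε(x,·) = ε f̂_ε(x) q̂(x,·) + (1−ε) f_ε(x) q(x,·). Then μ_ε q_ε = μ_ε, and moreover H(μ_ε × q_ε | μ_ε × p) ≤ ε H(μ̂ × q̂ | μ̂ × p) + (1−ε) H(μ × q | μ × p). -/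
open MeasureTheory ProbabilityTheory
open scoped ENNReal MeasureTheory

-- Relative entropy `H(α|β) = ∫ log (dα/dβ) dα` if `α ≪ β`, and `+∞` otherwise.
open Classical in
noncomputable def relEnt {X : Type*} [MeasurableSpace X] (α β : Measure X) : EReal :=
  if α ≪ β then ((∫ x, Real.log ((α.rnDeriv β x).toReal) ∂α : ℝ) : EReal) else ⊤

/-!
Integrating the densities `f̂_ε, f_ε` against `μ_ε` turns the definition of `q_ε` into the
decomposition `μ_ε ⊗ q_ε = ε (μ̂ ⊗ q̂) + (1 - ε) (μ ⊗ q)`, whose second marginal gives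
stationarity. The reference measure splits in the same way, `μ_ε ⊗ p = ε (μ̂ ⊗ p) + (1 - ε) (μ ⊗ p)`,
so the entropy bound is the joint convexity of the Kullback–Leibler divergence: with respect to
`β = β₁ + β₂` the density of `α₁ + α₂` is `u₁ g₁ + u₂ g₂`, where `gᵢ = dαᵢ/dβᵢ` and the weights
`uᵢ = dβᵢ/dβ` sum to one, and `x log x` is convex.

Since `relEnt` is `0` rather than `+∞` when the log-density is not integrable, one also needs that
a finite divergence of the mixture forces finite divergences of the components. The inequality
`ε (μ̂ ⊗ q̂) ≤ μ_ε ⊗ q_ε` bounds the density of `μ̂ ⊗ q̂` against `μ_ε ⊗ q_ε`, and the chain rule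
`KL(μ̂ ⊗ q̂ | μ_ε ⊗ p) = KL(μ̂ | μ_ε) + KL(μ̂ ⊗ q̂ | μ̂ ⊗ p)` passes from `μ_ε ⊗ p` to `μ̂ ⊗ p`.
-/

open InformationTheory Real
open scoped NNReal

lemma ofReal_klFun_toReal_mul_add_mul_le {u₁ u₂ g₁ g₂ : ℝ≥0∞} (hu : u₁ + u₂ = 1)
    (h₁ : g₁ * u₁ ≠ ∞) (h₂ : g₂ * u₂ ≠ ∞) :
    ENNReal.ofReal (klFun (g₁ * u₁ + g₂ * u₂).toReal)
      ≤ u₁ * ENNReal.ofReal (klFun g₁.toReal) + u₂ * ENNReal.ofReal (klFun g₂.toReal) := by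
  have hu₁ : u₁ ≠ ∞ := ne_top_of_le_ne_top ENNReal.one_ne_top (hu ▸ le_self_add)
  have hu₂ : u₂ ≠ ∞ := ne_top_of_le_ne_top ENNReal.one_ne_top (hu ▸ le_add_self)
  have hu' : u₁.toReal + u₂.toReal = 1 := by
    rw [← ENNReal.toReal_add hu₁ hu₂, hu, ENNReal.toReal_one]
  have hconv := convexOn_klFun.2 (Set.mem_Ici.2 (ENNReal.toReal_nonneg (a := g₁)))
    (Set.mem_Ici.2 (ENNReal.toReal_nonneg (a := g₂))) ENNReal.toReal_nonneg
    ENNReal.toReal_nonneg hu'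
  simp only [smul_eq_mul] at hconv
  have hk₁ := klFun_nonneg (ENNReal.toReal_nonneg (a := g₁))
  have hk₂ := klFun_nonneg (ENNReal.toReal_nonneg (a := g₂))
  calc ENNReal.ofReal (klFun (g₁ * u₁ + g₂ * u₂).toReal)
      ≤ ENNReal.ofReal (u₁.toReal * klFun g₁.toReal + u₂.toReal * klFun g₂.toReal) := by
        rw [ENNReal.toReal_add h₁ h₂, ENNReal.toReal_mul, ENNReal.toReal_mul, mul_comm g₁.toReal,
          mul_comm g₂.toReal]
        exact ENNReal.ofReal_le_ofReal hconv
    _ = u₁ * ENNReal.ofReal (klFun g₁.toReal) + u₂ * ENNReal.ofReal (klFun g₂.toReal) := by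
        rw [ENNReal.ofReal_add (by positivity) (by positivity),
          ENNReal.ofReal_mul ENNReal.toReal_nonneg, ENNReal.ofReal_mul ENNReal.toReal_nonneg,
          ENNReal.ofReal_toReal hu₁, ENNReal.ofReal_toReal hu₂]

section KLDivergence

variable {Y : Type*} [MeasurableSpace Y]

lemma klDiv_add_le (α₁ α₂ β₁ β₂ : Measure Y) [IsFiniteMeasure α₁] [IsFiniteMeasure α₂]
    [IsFiniteMeasure β₁] [IsFiniteMeasure β₂] :
    klDiv (α₁ + α₂) (β₁ + β₂) ≤ klDiv α₁ β₁ + klDiv α₂ β₂ := by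
  by_cases h₁ : α₁ ≪ β₁
  swap; · simp [h₁]
  by_cases h₂ : α₂ ≪ β₂
  swap; · simp [h₂]
  set β := β₁ + β₂
  have hβ₁ : β₁ ≪ β := Measure.AbsolutelyContinuous.rfl.add_right β₂
  have hβ₂ : β₂ ≪ β := Measure.AbsolutelyContinuous.rfl.add_right' β₁
  rw [klDiv_eq_lintegral_klFun_of_ac (h₁.add h₂), klDiv_eq_lintegral_klFun_of_ac h₁,
    klDiv_eq_lintegral_klFun_of_ac h₂, ← lintegral_rnDeriv_mul hβ₁ (by fun_prop),
    ← lintegral_rnDeriv_mul hβ₂ (by fun_prop), ← lintegral_add_left (by fun_prop)]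
  have hweights : β₁.rnDeriv β + β₂.rnDeriv β =ᵐ[β] 1 :=
    (Measure.rnDeriv_add' β₁ β₂ β).symm.trans (Measure.rnDeriv_self β)
  refine lintegral_mono_ae ?_
  filter_upwards [Measure.rnDeriv_add' α₁ α₂ β, hweights, Measure.rnDeriv_mul_rnDeriv h₁,
    Measure.rnDeriv_mul_rnDeriv h₂, Measure.rnDeriv_ne_top α₁ β, Measure.rnDeriv_ne_top α₂ β]
    with y hα hw hc₁ hc₂ hf₁ hf₂
  simp only [Pi.add_apply, Pi.mul_apply, Pi.one_apply] at hα hw hc₁ hc₂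
  rw [hα, ← hc₁, ← hc₂]
  exact ofReal_klFun_toReal_mul_add_mul_le hw (hc₁ ▸ hf₁) (hc₂ ▸ hf₂)

lemma klDiv_smul_add_smul_le (α₁ α₂ β₁ β₂ : Measure Y) [IsFiniteMeasure α₁]
    [IsFiniteMeasure α₂] [IsFiniteMeasure β₁] [IsFiniteMeasure β₂] (a b : ℝ≥0) :
    klDiv (a • α₁ + b • α₂) (a • β₁ + b • β₂) ≤ a * klDiv α₁ β₁ + b * klDiv α₂ β₂ := by
  rw [← klDiv_smul_same, ← klDiv_smul_same]
  exact klDiv_add_le _ _ _ _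

lemma integrable_llr_of_smul_le {μ₁ μ : Measure Y} [IsFiniteMeasure μ₁] [IsFiniteMeasure μ]
    {c : ℝ≥0∞} (hc₀ : c ≠ 0) (hc : c ≠ ∞) (hle : c • μ₁ ≤ μ) :
    Integrable (llr μ₁ μ) μ₁ := by
  have hac : μ₁ ≪ μ := (Measure.absolutelyContinuous_smul hc₀).trans
    (Measure.absolutelyContinuous_of_le hle)
  have hbound : ∀ᵐ y ∂μ, μ₁.rnDeriv μ y ≤ c⁻¹ := by
    filter_upwards [Measure.rnDeriv_le_one_of_le hle,
      Measure.rnDeriv_smul_left_of_ne_top μ₁ μ hc] with y hle hsmul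
    rw [hsmul] at hle
    simpa [ENNReal.le_inv_iff_mul_le, mul_comm] using hle
  obtain ⟨C, hC⟩ := isCompact_Icc.exists_bound_of_continuousOn
    (continuous_mul_log.continuousOn (s := Set.Icc 0 c⁻¹.toReal))
  rw [← integrable_rnDeriv_mul_log_iff hac]
  refine Integrable.of_bound (by fun_prop) C ?_
  filter_upwards [hbound] with y hy
  exact hC _ ⟨ENNReal.toReal_nonneg, ENNReal.toReal_mono (ENNReal.inv_ne_top.2 hc₀) hy⟩

lemma llr_ae_eq_llr_add_llr {μ₁ μ ν : Measure Y} [IsFiniteMeasure μ₁] [IsFiniteMeasure μ]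
    [IsFiniteMeasure ν] (h₁ : μ₁ ≪ μ) (h : μ ≪ ν) :
    llr μ₁ ν =ᵐ[μ₁] llr μ₁ μ + llr μ ν := by
  filter_upwards [(h₁.trans h).ae_le (Measure.rnDeriv_mul_rnDeriv h₁ (κ := ν)),
    Measure.rnDeriv_pos h₁, h₁.ae_le (Measure.rnDeriv_pos h),
    h₁.ae_le (Measure.rnDeriv_ne_top μ₁ μ), (h₁.trans h).ae_le (Measure.rnDeriv_ne_top μ ν)]
    with y hmul hpos₁ hpos hfin₁ hfin
  simp only [llr, Pi.add_apply, ← hmul, Pi.mul_apply, ENNReal.toReal_mul]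
  exact Real.log_mul (ENNReal.toReal_pos hpos₁.ne' hfin₁).ne' (ENNReal.toReal_pos hpos.ne' hfin).ne'

lemma klDiv_ne_top_of_smul_le {μ₁ μ ν : Measure Y} [IsFiniteMeasure μ₁] [IsFiniteMeasure μ]
    [IsFiniteMeasure ν] {c : ℝ≥0∞} (hc₀ : c ≠ 0) (hc : c ≠ ∞) (hle : c • μ₁ ≤ μ)
    (hμν : klDiv μ ν ≠ ∞) : klDiv μ₁ ν ≠ ∞ := by
  obtain ⟨hac, hint⟩ := klDiv_ne_top_iff.1 hμν
  have hac₁ : μ₁ ≪ μ := (Measure.absolutelyContinuous_smul hc₀).trans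
    (Measure.absolutelyContinuous_of_le hle)
  refine klDiv_ne_top (hac₁.trans hac) ?_
  rw [integrable_congr (llr_ae_eq_llr_add_llr hac₁ hac)]
  exact (integrable_llr_of_smul_le hc₀ hc hle).add
    ((integrable_smul_measure hc₀ hc).1 (hint.mono_measure hle))

end KLDivergence

section RelativeEntropy

variable {Y : Type*} [MeasurableSpace Y] {α β : Measure Y}

lemma relEnt_of_not_ac (h : ¬ α ≪ β) : relEnt α β = ⊤ := by
  simp [relEnt, h]

lemma relEnt_of_ac [IsProbabilityMeasure α] [IsProbabilityMeasure β] (h : α ≪ β) :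
    relEnt α β = (klDiv α β).toReal := by
  rw [relEnt, if_pos h, toReal_klDiv_of_measure_eq h (by simp)]
  rfl

lemma relEnt_nonneg [IsProbabilityMeasure α] [IsProbabilityMeasure β] : 0 ≤ relEnt α β := by
  by_cases h : α ≪ β
  · rw [relEnt_of_ac h]
    exact EReal.coe_nonneg.2 ENNReal.toReal_nonneg
  · simp [relEnt_of_not_ac h]

lemma coe_mul_relEnt_ne_bot [IsProbabilityMeasure α] [IsProbabilityMeasure β] {c : ℝ}
    (hc : 0 ≤ c) : (c : EReal) * relEnt α β ≠ ⊥ :=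
  ne_bot_of_le_ne_bot EReal.zero_ne_bot (EReal.mul_nonneg (EReal.coe_nonneg.2 hc) relEnt_nonneg)

lemma relEnt_le_of_eq_smul_add_smul {α₁ α₂ β₁ β₂ : Measure Y} [IsProbabilityMeasure α]
    [IsProbabilityMeasure β] [IsProbabilityMeasure α₁] [IsProbabilityMeasure α₂]
    [IsProbabilityMeasure β₁] [IsProbabilityMeasure β₂] {ε : ℝ} (hε₀ : 0 < ε) (hε₁ : ε < 1)
    (hα : α = ENNReal.ofReal ε • α₁ + ENNReal.ofReal (1 - ε) • α₂)
    (hβ : β = ENNReal.ofReal ε • β₁ + ENNReal.ofReal (1 - ε) • β₂)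
    (hfin₁ : klDiv α β ≠ ∞ → klDiv α₁ β₁ ≠ ∞) (hfin₂ : klDiv α β ≠ ∞ → klDiv α₂ β₂ ≠ ∞) :
    relEnt α β ≤ (ε : EReal) * relEnt α₁ β₁ + ((1 - ε : ℝ) : EReal) * relEnt α₂ β₂ := by
  have hε₁' : 0 < 1 - ε := sub_pos.2 hε₁
  by_cases h₁ : α₁ ≪ β₁
  swap
  · rw [relEnt_of_not_ac h₁, EReal.coe_mul_top_of_pos hε₀,
      EReal.top_add_of_ne_bot (coe_mul_relEnt_ne_bot hε₁'.le)]
    exact le_top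
  by_cases h₂ : α₂ ≪ β₂
  swap
  · rw [relEnt_of_not_ac h₂, EReal.coe_mul_top_of_pos hε₁',
      EReal.add_top_of_ne_bot (coe_mul_relEnt_ne_bot hε₀.le)]
    exact le_top
  have hac : α ≪ β := hα ▸ hβ ▸ (h₁.smul _).add (h₂.smul _)
  rw [relEnt_of_ac hac, relEnt_of_ac h₁, relEnt_of_ac h₂, ← EReal.coe_mul, ← EReal.coe_mul,
    ← EReal.coe_add, EReal.coe_le_coe_iff]
  by_cases hfin : klDiv α β = ∞
  · rw [hfin, ENNReal.toReal_top]
    positivity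
  have hle : klDiv α β
      ≤ ENNReal.ofReal ε * klDiv α₁ β₁ + ENNReal.ofReal (1 - ε) * klDiv α₂ β₂ := by
    rw [hα, hβ]
    exact klDiv_smul_add_smul_le α₁ α₂ β₁ β₂ _ _
  have hle' := ENNReal.toReal_mono (by finiteness [hfin₁ hfin, hfin₂ hfin]) hle
  rwa [ENNReal.toReal_add (by finiteness [hfin₁ hfin]) (by finiteness [hfin₂ hfin]),
    ENNReal.toReal_mul, ENNReal.toReal_mul, ENNReal.toReal_ofReal hε₀.le,
    ENNReal.toReal_ofReal hε₁'.le] at hle'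

end RelativeEntropy

section CompProd

variable {X Y : Type*} [MeasurableSpace X] [MeasurableSpace Y]

lemma isProbabilityMeasure_ofReal_smul_add_ofReal_smul (μ₁ μ₂ : Measure X)
    [IsProbabilityMeasure μ₁] [IsProbabilityMeasure μ₂] {ε : ℝ} (hε₀ : 0 ≤ ε) (hε₁ : ε ≤ 1) :
    IsProbabilityMeasure (ENNReal.ofReal ε • μ₁ + ENNReal.ofReal (1 - ε) • μ₂) := by
  constructor
  simp [← ENNReal.ofReal_add hε₀ (sub_nonneg.2 hε₁)]

lemma MeasureTheory.Measure.snd_smul (c : ℝ≥0∞) (ρ : Measure (X × Y)) : (c • ρ).snd = c • ρ.snd :=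
  Measure.map_smul c ρ Prod.snd

lemma compProd_eq_smul_add_smul_of_ae_eq {ν ν₁ ν₂ : Measure X} [SigmaFinite ν] [SigmaFinite ν₁]
    [SigmaFinite ν₂] {κ κ₁ κ₂ : Kernel X Y} [IsSFiniteKernel κ] [IsSFiniteKernel κ₁]
    [IsSFiniteKernel κ₂] {a b : ℝ≥0∞} (h₁ : ν₁ ≪ ν) (h₂ : ν₂ ≪ ν)
    (hκ : ∀ᵐ x ∂ν, κ x = (a * ν₁.rnDeriv ν x) • κ₁ x + (b * ν₂.rnDeriv ν x) • κ₂ x) :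
    ν ⊗ₘ κ = a • (ν₁ ⊗ₘ κ₁) + b • (ν₂ ⊗ₘ κ₂) := by
  ext s hs
  have hκ₁ := Kernel.measurable_kernel_prodMk_left (κ := κ₁) hs
  have hκ₂ := Kernel.measurable_kernel_prodMk_left (κ := κ₂) hs
  have hf₁ : Measurable fun x => ν₁.rnDeriv ν x * κ₁ x (Prod.mk x ⁻¹' s) :=
    (ν₁.measurable_rnDeriv ν).mul hκ₁
  have hf₂ : Measurable fun x => ν₂.rnDeriv ν x * κ₂ x (Prod.mk x ⁻¹' s) :=
    (ν₂.measurable_rnDeriv ν).mul hκ₂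
  rw [Measure.compProd_apply hs, Measure.add_apply, Measure.smul_apply, Measure.smul_apply,
    Measure.compProd_apply hs, Measure.compProd_apply hs, smul_eq_mul, smul_eq_mul,
    ← lintegral_rnDeriv_mul h₁ hκ₁.aemeasurable, ← lintegral_rnDeriv_mul h₂ hκ₂.aemeasurable,
    ← lintegral_const_mul _ hf₁, ← lintegral_const_mul _ hf₂,
    ← lintegral_add_left (hf₁.const_mul a)]
  refine lintegral_congr_ae ?_
  filter_upwards [hκ] with x hx
  simp [hx, mul_assoc]

lemma klDiv_compProd_ne_top_of_smul_le {μ ν : Measure X} [IsFiniteMeasure μ] [IsFiniteMeasure ν]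
    {κ η : Kernel X Y} [IsMarkovKernel κ] [IsMarkovKernel η] {ρ : Measure (X × Y)}
    [IsFiniteMeasure ρ] {c : ℝ≥0∞} (hc₀ : c ≠ 0) (hc : c ≠ ∞) (hle : c • (μ ⊗ₘ κ) ≤ ρ)
    (hρ : klDiv ρ (ν ⊗ₘ η) ≠ ∞) : klDiv (μ ⊗ₘ κ) (μ ⊗ₘ η) ≠ ∞ := by
  have h := klDiv_ne_top_of_smul_le hc₀ hc hle hρ
  rw [klDiv_compProd_eq_add] at h
  exact (ENNReal.add_ne_top.1 h).2

end CompProd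

theorem mixture_kernel_stationarity_and_entropy_convexity_general
    {X : Type*} [MeasurableSpace X]
    (μ μhat : Measure X) [IsProbabilityMeasure μ] [IsProbabilityMeasure μhat]
    (p q qhat : Kernel X X) [IsMarkovKernel p] [IsMarkovKernel q] [IsMarkovKernel qhat]
    (hq : μ.bind (fun x => q x) = μ)
    (hqhat : μhat.bind (fun x => qhat x) = μhat)
    (ε : ℝ) (hε0 : 0 < ε) (hε1 : ε < 1)
    (με : Measure X)
    (hμε : με = ENNReal.ofReal ε • μhat + ENNReal.ofReal (1 - ε) • μ)
    (qε : Kernel X X) [IsMarkovKernel qε]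
    (hqε : ∀ᵐ x ∂με, qε x
        = (ENNReal.ofReal ε * μhat.rnDeriv με x) • qhat x
          + (ENNReal.ofReal (1 - ε) * μ.rnDeriv με x) • q x) :
    με.bind (fun x => qε x) = με ∧
      relEnt (με ⊗ₘ qε) (με ⊗ₘ p)
        ≤ (ε : EReal) * relEnt (μhat ⊗ₘ qhat) (μhat ⊗ₘ p)
          + ((1 - ε : ℝ) : EReal) * relEnt (μ ⊗ₘ q) (μ ⊗ₘ p) := by
  have : IsProbabilityMeasure με :=
    hμε ▸ isProbabilityMeasure_ofReal_smul_add_ofReal_smul μhat μ hε0.le hε1.le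
  have hc₀ : ENNReal.ofReal ε ≠ 0 := (ENNReal.ofReal_pos.2 hε0).ne'
  have hc₀' : ENNReal.ofReal (1 - ε) ≠ 0 := (ENNReal.ofReal_pos.2 (sub_pos.2 hε1)).ne'
  have hμhat : μhat ≪ με := hμε ▸ (Measure.absolutelyContinuous_smul hc₀).add_right _
  have hμ : μ ≪ με := hμε ▸ (Measure.absolutelyContinuous_smul hc₀').add_right' _
  have hjoint := compProd_eq_smul_add_smul_of_ae_eq hμhat hμ hqε
  have href : με ⊗ₘ p = ENNReal.ofReal ε • (μhat ⊗ₘ p) + ENNReal.ofReal (1 - ε) • (μ ⊗ₘ p) := by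
    rw [hμε, Measure.compProd_add_left, Measure.compProd_smul_left, Measure.compProd_smul_left]
  refine ⟨?_, relEnt_le_of_eq_smul_add_smul hε0 hε1 hjoint href (fun h => ?_) (fun h => ?_)⟩
  · rw [← Measure.snd_compProd, hjoint, Measure.snd_add, Measure.snd_smul, Measure.snd_smul,
      Measure.snd_compProd, Measure.snd_compProd, hqhat, hq, hμε]
  · exact klDiv_compProd_ne_top_of_smul_le hc₀ ENNReal.ofReal_ne_top
      (hjoint ▸ Measure.le_add_right le_rfl) h
  · exact klDiv_compProd_ne_top_of_smul_le hc₀' ENNReal.ofReal_ne_top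
      (hjoint ▸ Measure.le_add_left le_rfl) h

/-- Convex interpolation of stationary measure/kernel pairs: if `μq = μ`, `μ̂q̂ = μ̂`,
`μ_ε = ε μ̂ + (1-ε) μ` and `q_ε = ε f̂_ε q̂ + (1-ε) f_ε q` with densities
`f_ε = dμ/dμ_ε`, `f̂_ε = dμ̂/dμ_ε`, then `μ_ε q_ε = μ_ε` and
`H(μ_ε × q_ε | μ_ε × p) ≤ ε H(μ̂ × q̂ | μ̂ × p) + (1-ε) H(μ × q | μ × p)`. -/
theorem mixture_kernel_stationarity_and_entropy_convexity
    {X : Type*} [MeasurableSpace X] [TopologicalSpace X] [PolishSpace X] [BorelSpace X]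
    (μ μhat : Measure X) [IsProbabilityMeasure μ] [IsProbabilityMeasure μhat]
    (p q qhat : Kernel X X) [IsMarkovKernel p] [IsMarkovKernel q] [IsMarkovKernel qhat]
    (hq : μ.bind (fun x => q x) = μ)
    (hqhat : μhat.bind (fun x => qhat x) = μhat)
    (ε : ℝ) (hε0 : 0 < ε) (hε1 : ε < 1)
    (με : Measure X)
    (hμε : με = ENNReal.ofReal ε • μhat + ENNReal.ofReal (1 - ε) • μ)
    (qε : Kernel X X) [IsMarkovKernel qε]
    (hqε : ∀ᵐ x ∂με, qε x
        = (ENNReal.ofReal ε * μhat.rnDeriv με x) • qhat x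
          + (ENNReal.ofReal (1 - ε) * μ.rnDeriv με x) • q x) :
    με.bind (fun x => qε x) = με ∧
      relEnt (με ⊗ₘ qε) (με ⊗ₘ p)
        ≤ (ε : EReal) * relEnt (μhat ⊗ₘ qhat) (μhat ⊗ₘ p)
          + ((1 - ε : ℝ) : EReal) * relEnt (μ ⊗ₘ q) (μ ⊗ₘ p) :=
  mixture_kernel_stationarity_and_entropy_convexity_general μ μhat p q qhat hq hqhat ε hε0 hε1 με
    hμε qε hqε
end
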